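/- Let h : ℝ → ℝ be real analytic and let f : ℝ → ℝ be C^∞, and suppose f(t) = h(t) for all t > 0 and f(t) = -h(t) for all t < 0. Then h is identically zero on ℝ. -/

import Mathlib

/-!
On either side of `0` the smooth function `f` coincides with `h` or with `-h`, so by continuity
every derivative of `h` at `0` equals its own negative and vanishes. An analytic function whose
whole jet vanishes at a point is zero near it, hence zero on all of `ℝ` by the identity theorem.
-/

open Set Filter Topology

theorem iteratedDeriv_eq_of_eqOn_of_mem_closure {𝕜 F : Type*} [NontriviallyNormedField 𝕜]
    [NormedAddCommGroup F] [NormedSpace 𝕜 F] {f g : 𝕜 → F} {s : Set 𝕜} {x : 𝕜} {n : ℕ}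
    (hs : IsOpen s) (hx : x ∈ closure s) (hf : ContDiff 𝕜 n f) (hg : ContDiff 𝕜 n g)
    (hfg : EqOn f g s) : iteratedDeriv n f x = iteratedDeriv n g x := by
  have hderiv : EqOn (iteratedDeriv n f) (iteratedDeriv n g) s := fun y hy =>
    (eventuallyEq_of_mem (hs.mem_nhds hy) hfg).iteratedDeriv_eq n
  exact hderiv.closure (hf.continuous_iteratedDeriv n le_rfl)
    (hg.continuous_iteratedDeriv n le_rfl) hx

theorem AnalyticAt.eventually_eq_zero_of_iteratedDeriv_eq_zero {𝕜 E : Type*}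
    [NontriviallyNormedField 𝕜] [CharZero 𝕜] [NormedAddCommGroup E] [NormedSpace 𝕜 E]
    [CompleteSpace E] {f : 𝕜 → E} {x : 𝕜} (hf : AnalyticAt 𝕜 f x)
    (h : ∀ n, iteratedDeriv n f x = 0) : ∀ᶠ z in 𝓝 x, f z = 0 := by
  refine analyticOrderAt_eq_top.mp (ENat.eq_top_iff_forall_ge.mpr fun n => ?_)
  exact (natCast_le_analyticOrderAt_iff_iteratedDeriv_eq_zero hf).mpr fun i _ => h i

/-- Theorem 1 (analytic core): if a real analytic function `h` agrees with a
`C^∞` function `f` for `t > 0` and with `-f`-matching sign (`f = -h`) for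
`t < 0`, then `h` vanishes identically. -/
theorem analytic_sign_flip_vanishes (h f : ℝ → ℝ)
    (hh : ∀ x : ℝ, AnalyticAt ℝ h x)
    (hf : ContDiff ℝ (⊤ : ℕ∞) f)
    (hpos : ∀ t : ℝ, 0 < t → f t = h t)
    (hneg : ∀ t : ℝ, t < 0 → f t = -h t) :
    ∀ t : ℝ, h t = 0 := by
  have hh_univ : AnalyticOnNhd ℝ h univ := fun x _ => hh x
  have hjet : ∀ n : ℕ, iteratedDeriv n h 0 = 0 := by
    intro n
    have hfn : ContDiff ℝ n f := hf.of_le (by exact_mod_cast le_top)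
    have hright : iteratedDeriv n f 0 = iteratedDeriv n h 0 :=
      iteratedDeriv_eq_of_eqOn_of_mem_closure isOpen_Ioi (by simp) hfn hh_univ.contDiff hpos
    have hleft : iteratedDeriv n f 0 = iteratedDeriv n (-h) 0 :=
      iteratedDeriv_eq_of_eqOn_of_mem_closure isOpen_Iio (by simp) hfn hh_univ.contDiff.neg hneg
    rw [iteratedDeriv_neg] at hleft
    linarith
  have hnear : h =ᶠ[𝓝 0] 0 := (hh 0).eventually_eq_zero_of_iteratedDeriv_eq_zero hjet
  exact fun t => hh_univ.eqOn_zero_of_preconnected_of_eventuallyEq_zero isPreconnected_univ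
    (mem_univ 0) hnear (mem_univ t)
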